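/- Invariance of the physical-limit subspace for the augmented damped harmonic oscillator: Fix m > 0, k, λ ∈ ℝ, and define F : ℝ⁴ → ℝ⁴ by F(q_a, q_b, π_a, π_b) = (π_a/m + (λ/2m)(q_a − q_b), −π_b/m − (λ/2m)(q_a − q_b), −(λ/2m)(π_a − π_b) − k q_a, (λ/2m)(π_a − π_b) + k q_b). Let z : [0,T] → ℝ⁴ be differentiable with z'(t) = F(z(t)) and z(0) in the physical-limit subspace PL = {(q_a, q_b, π_a, π_b) ∈ ℝ⁴ : q_a = q_b and π_a = −π_b}. Then z(t) ∈ PL for all t ∈ [0,T]. -/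

import Mathlib

/-!
In the constraint coordinates `d = q_a − q_b`, `s = π_a + π_b` the augmented vector field closes
up into the linear system `d' = (λ/m) d + s/m`, `s' = −k d`, and `PL` is the zero set of `(d, s)`.
Since `0` is an equilibrium of a Lipschitz field, uniqueness of solutions (Gronwall) keeps
`(d, s)` at `0`.
-/

noncomputable section

/-- The physical-limit subspace `PL = {(q_a, q_b, π_a, π_b) : q_a = q_b, π_a = −π_b}`. -/
def PLset : Set (ℝ × ℝ × ℝ × ℝ) := {z | z.1 = z.2.1 ∧ z.2.2.1 = -z.2.2.2}

/-- The Hamiltonian vector field of the augmented damped harmonic oscillator with mass `m`,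
spring constant `k` and damping constant `lam`, in coordinates `(q_a, q_b, π_a, π_b)`. -/
def augF (m k lam : ℝ) (z : ℝ × ℝ × ℝ × ℝ) : ℝ × ℝ × ℝ × ℝ :=
  (z.2.2.1 / m + (lam / (2 * m)) * (z.1 - z.2.1),
   -z.2.2.2 / m - (lam / (2 * m)) * (z.1 - z.2.1),
   -(lam / (2 * m)) * (z.2.2.1 - z.2.2.2) - k * z.1,
   (lam / (2 * m)) * (z.2.2.1 - z.2.2.2) + k * z.2.1)

open Set

theorem eqOn_const_of_hasDerivWithinAt_of_equilibrium {E : Type*} [NormedAddCommGroup E]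
    [NormedSpace ℝ E] {v : E → E} {K : NNReal} (hv : LipschitzWith K v) {x₀ : E}
    (hx₀ : v x₀ = 0) {w : ℝ → E} {a b : ℝ}
    (hw : ∀ t ∈ Icc a b, HasDerivWithinAt w (v (w t)) (Icc a b) t) (ha : w a = x₀) :
    EqOn w (fun _ => x₀) (Icc a b) :=
  ODE_solution_unique (v := fun _ => v) (fun _ => hv)
    (fun t ht => (hw t ht).continuousWithinAt)
    (fun t ht => (hw t (Ico_subset_Icc_self ht)).mono_of_mem_nhdsWithin
      (Icc_mem_nhdsGE_of_mem ht))
    continuousOn_const (fun t _ => by simpa [hx₀] using hasDerivWithinAt_const t (Ici t) x₀) ha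

theorem map_eqOn_zero_of_semiconj {E F : Type*} [NormedAddCommGroup E] [NormedSpace ℝ E]
    [NormedAddCommGroup F] [NormedSpace ℝ F] {P : E →L[ℝ] F} {A : F →L[ℝ] F} {v : E → E}
    (hv : ∀ x, P (v x) = A (P x)) {z : ℝ → E} {a b : ℝ}
    (hz : ∀ t ∈ Icc a b, HasDerivWithinAt z (v (z t)) (Icc a b) t) (ha : P (z a) = 0) :
    EqOn (P ∘ z) 0 (Icc a b) :=
  eqOn_const_of_hasDerivWithinAt_of_equilibrium A.lipschitz A.map_zero
    (fun t ht => by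
      rw [Function.comp_apply, ← hv]
      exact P.hasFDerivAt.comp_hasDerivWithinAt t (hz t ht))
    ha

def constraintMap : (ℝ × ℝ × ℝ × ℝ) →L[ℝ] ℝ × ℝ :=
  LinearMap.toContinuousLinearMap
    { toFun := fun z => (z.1 - z.2.1, z.2.2.1 + z.2.2.2)
      map_add' := fun x y => by ext <;> simp only [Prod.fst_add, Prod.snd_add] <;> ring
      map_smul' := fun c x => by
        ext <;> simp only [Prod.smul_fst, Prod.smul_snd, smul_eq_mul, RingHom.id_apply] <;> ring }

def constraintField (m k lam : ℝ) : (ℝ × ℝ) →L[ℝ] ℝ × ℝ :=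
  LinearMap.toContinuousLinearMap
    { toFun := fun w => (lam / m * w.1 + w.2 / m, -k * w.1)
      map_add' := fun x y => by ext <;> simp only [Prod.fst_add, Prod.snd_add] <;> ring
      map_smul' := fun c x => by
        ext <;> simp only [Prod.smul_fst, Prod.smul_snd, smul_eq_mul, RingHom.id_apply] <;> ring }

theorem mem_PLset_iff {x : ℝ × ℝ × ℝ × ℝ} : x ∈ PLset ↔ constraintMap x = 0 := by
  simp [PLset, constraintMap, Prod.ext_iff, sub_eq_zero, add_eq_zero_iff_eq_neg]

theorem constraintMap_augF (m k lam : ℝ) (x : ℝ × ℝ × ℝ × ℝ) :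
    constraintMap (augF m k lam x) = constraintField m k lam (constraintMap x) := by
  simp only [constraintMap, constraintField, augF, LinearMap.coe_toContinuousLinearMap',
    LinearMap.coe_mk, AddHom.coe_mk, Prod.mk.injEq]
  constructor <;> ring

theorem physical_limit_invariant_general
    (m k lam : ℝ) (T : ℝ)
    (z : ℝ → ℝ × ℝ × ℝ × ℝ)
    (hz : ∀ t ∈ Set.Icc (0:ℝ) T,
      HasDerivWithinAt z (augF m k lam (z t)) (Set.Icc 0 T) t)
    (h0 : z 0 ∈ PLset) :
    ∀ t ∈ Set.Icc (0:ℝ) T, z t ∈ PLset := by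
  intro t ht
  rw [mem_PLset_iff] at h0 ⊢
  exact map_eqOn_zero_of_semiconj (constraintMap_augF m k lam) hz h0 ht

/-- **Invariance of the physical-limit subspace for the augmented damped harmonic
oscillator.** Any solution of `z' = F(z)` starting in `PL` stays in `PL`. -/
theorem physical_limit_invariant
    (m k lam : ℝ) (hm : 0 < m) (T : ℝ) (hT : 0 ≤ T)
    (z : ℝ → ℝ × ℝ × ℝ × ℝ)
    (hz : ∀ t ∈ Set.Icc (0:ℝ) T,
      HasDerivWithinAt z (augF m k lam (z t)) (Set.Icc 0 T) t)
    (h0 : z 0 ∈ PLset) :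
    ∀ t ∈ Set.Icc (0:ℝ) T, z t ∈ PLset :=
  physical_limit_invariant_general m k lam T z hz h0
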